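/- On the hyperboloid model, the normal vectors satisfy B_κ^i(u) = −(1/r) θ^i(u) and B_{κi}(u) = (1/r†) η_i(u), so the model is a dual quadric hypersurface with k_0 l_0 = −1/(r r†); consequently H^{(1)}_{abκ}(u) = −(1/r†) g_{ab}(u), H^{(−1)}_{abκ}(u) = (1/r) g_{ab}(u), and R^{(±1)}_{abcd}(u) = −(1/(r r†))(g_{ad}g_{bc} − g_{ac}g_{bd}), with g_{11} = r r† and g_{ab} = δ_{ab} r r† sinh² u^1 ∏_{c=2}^a sin² u^{c−1} for a ≥ 2. -/

import Mathlib

noncomputable def pd {m : ℕ} (i : Fin m) (f : (Fin m → ℝ) → ℝ) (x : Fin m → ℝ) : ℝ :=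
  fderiv ℝ f x (Pi.single i 1)

/-!
With the Lorentz form `⟨x, y⟩ = x₀y₀ - Σᵢ xᵢyᵢ` and `J = diag(1, -1, …, -1)`, the coordinates
`ξ(u)` satisfy `⟨ξ, ξ⟩ = 1`, and `θ = -r Jξ`, `η = r† ξ`. Differentiating `⟨ξ, ξ⟩ = 1` gives
`⟨ξ, ∂ₐξ⟩ = 0`, so `Jξ` and `ξ` are normals dual to `η` and `θ`. Differentiating these
orthogonality relations once more turns both second fundamental forms into multiples of
`g_ab = -r r† ⟨∂ₐξ, ∂_bξ⟩`, and the Gauss equation becomes algebra.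

The one real computation is the Gram matrix `⟨∂ₐξ, ∂_bξ⟩`. Write `ξ = (cosh u¹, sinh u¹ s)`, where
`s` gives spherical coordinates on the unit sphere. Each tail of `s` again parametrizes a unit
sphere, so the Gram matrix is diagonal with the stated entries.
-/

open Finset

variable {m : ℕ}

section PartialDerivatives

variable {a : Fin m} {f g : (Fin m → ℝ) → ℝ} {x : Fin m → ℝ}

theorem pd_const (a : Fin m) (c : ℝ) (x : Fin m → ℝ) : pd a (fun _ => c) x = 0 := by
  simp [pd]

theorem pd_fun_mul (hf : DifferentiableAt ℝ f x) (hg : DifferentiableAt ℝ g x) :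
    pd a (fun u => f u * g u) x = pd a f x * g x + f x * pd a g x := by
  simp only [pd, fderiv_fun_mul hf hg, add_apply, smul_apply, smul_eq_mul]
  ring

theorem pd_const_mul (hf : DifferentiableAt ℝ f x) (c : ℝ) :
    pd a (fun u => c * f u) x = c * pd a f x := by
  simp [pd, fderiv_const_mul hf c]

theorem pd_eq_const_mul_pd {c : ℝ} (hfg : ∀ v, f v = c * g v) (hg : DifferentiableAt ℝ g x) :
    pd a f x = c * pd a g x := by
  rw [funext hfg, pd_const_mul hg]

theorem pd_fun_sum {ι : Type*} {s : Finset ι} {F : ι → (Fin m → ℝ) → ℝ}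
    (hF : ∀ i ∈ s, DifferentiableAt ℝ (F i) x) :
    pd a (fun u => ∑ i ∈ s, F i u) x = ∑ i ∈ s, pd a (F i) x := by
  simp [pd, fderiv_fun_sum hF]

theorem pd_finset_prod {ι : Type*} [DecidableEq ι] {s : Finset ι} {F : ι → (Fin m → ℝ) → ℝ}
    (hF : ∀ i ∈ s, DifferentiableAt ℝ (F i) x) :
    pd a (fun u => ∏ i ∈ s, F i u) x = ∑ i ∈ s, (∏ j ∈ s.erase i, F j x) * pd a (F i) x := by
  simp [pd, fderiv_finsetProd hF]

theorem pd_comp_apply {h : ℝ → ℝ} (hh : Differentiable ℝ h) (a e : Fin m) (x : Fin m → ℝ) :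
    pd a (fun u => h (u e)) x = if a = e then deriv h (x e) else 0 := by
  have hc : (fun u : Fin m → ℝ => h (u e)) =
      h ∘ ContinuousLinearMap.proj (R := ℝ) (φ := fun _ : Fin m => ℝ) e := rfl
  rw [pd, hc, fderiv_comp x (hh _) (ContinuousLinearMap.proj e).differentiableAt,
    ContinuousLinearMap.fderiv]
  simp only [ContinuousLinearMap.coe_comp, Function.comp_apply,
    ContinuousLinearMap.proj_apply, Pi.single_apply]
  split_ifs with hae hea hea
  · rw [hae, fderiv_apply_one_eq_deriv]
  · exact absurd hae.symm hea
  · exact absurd hea.symm hae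
  · simp

theorem differentiable_pd (hf : ContDiff ℝ 2 f) (b : Fin m) :
    Differentiable ℝ (fun v => pd b f v) :=
  ((hf.fderiv_right (m := 1) (by norm_num)).differentiable (by norm_num)).clm_apply
    (differentiable_const _)

end PartialDerivatives

section DifferentiatingIdentities

variable {ι : Type*} [Fintype ι] {F G N : ι → (Fin m → ℝ) → ℝ}

theorem sum_pd_mul_add_mul_pd_eq_zero (hF : ∀ i, Differentiable ℝ (F i))
    (hG : ∀ i, Differentiable ℝ (G i)) {c : ℝ} (h : ∀ v, ∑ i, F i v * G i v = c)
    (a : Fin m) (x : Fin m → ℝ) :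
    ∑ i, (pd a (F i) x * G i x + F i x * pd a (G i) x) = 0 := by
  have hpair := pd_const a c x
  simp only [← funext h] at hpair
  rw [pd_fun_sum (F := fun i v => F i v * G i v)
    fun i _ => ((hF i).mul (hG i)).differentiableAt] at hpair
  simpa only [pd_fun_mul (hF _).differentiableAt (hG _).differentiableAt] using hpair

theorem sum_mul_mul_pd_eq_zero_of_sum_mul_sq_eq (w : ι → ℝ) (hF : ∀ i, Differentiable ℝ (F i))
    {c : ℝ} (h : ∀ v, ∑ i, w i * F i v ^ 2 = c) (a : Fin m) (x : Fin m → ℝ) :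
    ∑ i, w i * F i x * pd a (F i) x = 0 := by
  have hpair := sum_pd_mul_add_mul_pd_eq_zero (G := fun i v => w i * F i v) hF
    (fun i => (hF i).const_mul (w i)) (c := c) (fun v => by simpa [sq, mul_left_comm] using h v) a x
  simp only [pd_const_mul (hF _).differentiableAt] at hpair
  have hdouble : ∑ i, (pd a (F i) x * (w i * F i x) + F i x * (w i * pd a (F i) x))
      = 2 * ∑ i, w i * F i x * pd a (F i) x := by
    rw [mul_sum]; exact sum_congr rfl fun i _ => by ring
  linarith

theorem sum_mul_pd_eq_zero_of_sum_mul_sq_eq {w : ι → ℝ} {ξ : ι → (Fin m → ℝ) → ℝ}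
    (hξ : ∀ i, Differentiable ℝ (ξ i)) {c : ℝ} (hQ : ∀ v, ∑ i, w i * ξ i v ^ 2 = c)
    {α β : ι → ℝ} {κ : ℝ} (hF : ∀ i v, F i v = α i * ξ i v) (hN : ∀ i v, N i v = β i * ξ i v)
    (hαβ : ∀ i, β i * α i = κ * w i) (b : Fin m) (x : Fin m → ℝ) :
    ∑ i, N i x * pd b (F i) x = 0 := by
  rw [← mul_zero κ, ← sum_mul_mul_pd_eq_zero_of_sum_mul_sq_eq w hξ hQ b x, mul_sum]
  refine sum_congr rfl fun i _ => ?_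
  rw [hN, pd_eq_const_mul_pd (hF i) (hξ i x), mul_mul_mul_comm, hαβ]
  ring

theorem sum_pd_mul_pd_eq_mul_sum {w : ι → ℝ} {ξ : ι → (Fin m → ℝ) → ℝ}
    (hξ : ∀ i, Differentiable ℝ (ξ i)) {α β : ι → ℝ} {κ : ℝ} (hF : ∀ i v, F i v = α i * ξ i v)
    (hG : ∀ i v, G i v = β i * ξ i v) (hαβ : ∀ i, α i * β i = κ * w i) (a b : Fin m)
    (x : Fin m → ℝ) :
    ∑ i, pd a (F i) x * pd b (G i) x = κ * ∑ i, w i * (pd a (ξ i) x * pd b (ξ i) x) := by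
  rw [mul_sum]
  refine sum_congr rfl fun i _ => ?_
  rw [pd_eq_const_mul_pd (hF i) (hξ i x), pd_eq_const_mul_pd (hG i) (hξ i x),
    mul_mul_mul_comm, hαβ]
  ring

theorem sum_pd_pd_mul_eq_neg_of_orthogonal (hF : ∀ i, ContDiff ℝ 2 (F i))
    (hG : ∀ i, Differentiable ℝ (G i)) {l : ℝ} (hN : ∀ i v, N i v = l * G i v) {b : Fin m}
    (horth : ∀ v, ∑ i, N i v * pd b (F i) v = 0) (a : Fin m) (x : Fin m → ℝ) :
    ∑ i, pd a (fun v => pd b (F i) v) x * N i x = -l * ∑ i, pd b (F i) x * pd a (G i) x := by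
  have hN' : N = fun i v => l * G i v := funext₂ hN
  subst hN'
  have hpair := sum_pd_mul_add_mul_pd_eq_zero (fun i => differentiable_pd (hF i) b)
    (fun i => (hG i).const_mul l) (fun v => by simpa only [mul_comm] using horth v) a x
  simp only [pd_const_mul (hG _).differentiableAt, sum_add_distrib] at hpair
  rw [neg_mul, mul_sum, eq_neg_iff_add_eq_zero, ← hpair]
  congr 1
  exact sum_congr rfl fun i _ => by ring

end DifferentiatingIdentities

section SphereCoordinates

/- Angles are indexed by `ℕ`; for `k ≥ m` both `sinCoord` and `cosCoord` are `1`, so that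
`sphereCoord u j m = sinProd u j m` is the last coordinate of the tail sphere. -/
noncomputable def sinCoord (u : Fin m → ℝ) (k : ℕ) : ℝ :=
  if h : k < m then Real.sin (u ⟨k, h⟩) else 1

noncomputable def cosCoord (u : Fin m → ℝ) (k : ℕ) : ℝ :=
  if h : k < m then Real.cos (u ⟨k, h⟩) else 1

noncomputable def sinProd (u : Fin m → ℝ) (j i : ℕ) : ℝ :=
  ∏ k ∈ Ico j i, sinCoord u k

/-- For `j ≤ i ≤ m`, the spherical coordinates of the unit sphere in `ℝ^(m-j+1)` built from the
angles `u j, …, u (m-1)`. -/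
noncomputable def sphereCoord (u : Fin m → ℝ) (j i : ℕ) : ℝ :=
  sinProd u j i * cosCoord u i

/-- The derivative of `sphereCoord u α i` in the angle `u α`, for `α ≤ i`. -/
noncomputable def sphereCoordDeriv (u : Fin m → ℝ) (α i : ℕ) : ℝ :=
  if i = α then -sinCoord u α else cosCoord u α * sphereCoord u (α + 1) i

variable (u : Fin m → ℝ)

theorem sinCoord_sq_add_cosCoord_sq {k : ℕ} (hk : k < m) :
    sinCoord u k ^ 2 + cosCoord u k ^ 2 = 1 := by
  rw [sinCoord, cosCoord, dif_pos hk, dif_pos hk, Real.sin_sq_add_cos_sq]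

theorem sphereCoord_self (j : ℕ) : sphereCoord u j j = cosCoord u j := by
  simp [sphereCoord, sinProd]

theorem sphereCoord_of_lt {j i : ℕ} (h : j < i) :
    sphereCoord u j i = sinCoord u j * sphereCoord u (j + 1) i := by
  rw [sphereCoord, sphereCoord, sinProd, sinProd, prod_eq_prod_Ico_succ_bot h, mul_assoc]

theorem sinProd_mul_sphereCoord {j k i : ℕ} (hjk : j ≤ k) (hki : k ≤ i) :
    sinProd u j k * sphereCoord u k i = sphereCoord u j i := by
  rw [sphereCoord, sphereCoord, sinProd, sinProd, sinProd, ← mul_assoc,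
    prod_Ico_consecutive _ hjk hki]

theorem sum_sphereCoord_sq {j : ℕ} (hj : j ≤ m) :
    ∑ i ∈ Ico j (m + 1), sphereCoord u j i ^ 2 = 1 := by
  induction hj using Nat.decreasingInduction with
  | self => simp [sphereCoord_self, cosCoord]
  | of_succ k hk ih =>
    rw [sum_eq_sum_Ico_succ_bot (by omega), sphereCoord_self,
      sum_congr rfl fun i hi => by rw [sphereCoord_of_lt u (mem_Ico.1 hi).1, mul_pow],
      ← mul_sum, ih, mul_one, add_comm, sinCoord_sq_add_cosCoord_sq u hk]

theorem sphereCoordDeriv_of_lt {α i : ℕ} (h : α < i) :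
    sphereCoordDeriv u α i = cosCoord u α * sphereCoord u (α + 1) i := by
  rw [sphereCoordDeriv, if_neg h.ne']

theorem sum_sphereCoord_mul_sphereCoordDeriv {α : ℕ} (hα : α < m) :
    ∑ i ∈ Ico α (m + 1), sphereCoord u α i * sphereCoordDeriv u α i = 0 := by
  rw [sum_eq_sum_Ico_succ_bot (by omega), sphereCoord_self, sphereCoordDeriv, if_pos rfl,
    sum_congr rfl fun i hi => by
      rw [sphereCoord_of_lt u (mem_Ico.1 hi).1, sphereCoordDeriv_of_lt u (mem_Ico.1 hi).1,
        mul_mul_mul_comm, ← sq],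
    ← mul_sum, sum_sphereCoord_sq u (Nat.succ_le_of_lt hα)]
  ring

theorem sum_sphereCoordDeriv_sq {α : ℕ} (hα : α < m) :
    ∑ i ∈ Ico α (m + 1), sphereCoordDeriv u α i ^ 2 = 1 := by
  rw [sum_eq_sum_Ico_succ_bot (by omega), sphereCoordDeriv, if_pos rfl,
    sum_congr rfl fun i hi => by rw [sphereCoordDeriv_of_lt u (mem_Ico.1 hi).1, mul_pow],
    ← mul_sum, sum_sphereCoord_sq u (Nat.succ_le_of_lt hα), mul_one, neg_sq,
    sinCoord_sq_add_cosCoord_sq u hα]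

@[fun_prop]
theorem contDiff_sinCoord (n : WithTop ℕ∞) (k : ℕ) :
    ContDiff ℝ n (fun v : Fin m → ℝ => sinCoord v k) := by
  unfold sinCoord; split_ifs <;> fun_prop

@[fun_prop]
theorem contDiff_cosCoord (n : WithTop ℕ∞) (k : ℕ) :
    ContDiff ℝ n (fun v : Fin m → ℝ => cosCoord v k) := by
  unfold cosCoord; split_ifs <;> fun_prop

@[fun_prop]
theorem differentiable_sinCoord (k : ℕ) : Differentiable ℝ (fun v : Fin m → ℝ => sinCoord v k) :=
  (contDiff_sinCoord 1 k).differentiable one_ne_zero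

@[fun_prop]
theorem differentiable_cosCoord (k : ℕ) : Differentiable ℝ (fun v : Fin m → ℝ => cosCoord v k) :=
  (contDiff_cosCoord 1 k).differentiable one_ne_zero

@[fun_prop]
theorem contDiff_sinProd (n : WithTop ℕ∞) (j i : ℕ) :
    ContDiff ℝ n (fun v : Fin m → ℝ => sinProd v j i) := by
  unfold sinProd; fun_prop

@[fun_prop]
theorem differentiable_sinProd (j i : ℕ) : Differentiable ℝ (fun v : Fin m → ℝ => sinProd v j i) :=
  (contDiff_sinProd 1 j i).differentiable one_ne_zero

theorem pd_sinCoord (a : Fin m) (k : ℕ) :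
    pd a (fun v => sinCoord v k) u = if (a : ℕ) = k then cosCoord u k else 0 := by
  by_cases hk : k < m
  · simp only [sinCoord, cosCoord, dif_pos hk]
    rw [pd_comp_apply Real.differentiable_sin, Real.deriv_sin]
    simp [Fin.ext_iff]
  · simp only [sinCoord, dif_neg hk, pd_const]
    rw [if_neg (by omega)]

theorem pd_cosCoord (a : Fin m) (k : ℕ) :
    pd a (fun v => cosCoord v k) u = if (a : ℕ) = k then -sinCoord u k else 0 := by
  by_cases hk : k < m
  · simp only [sinCoord, cosCoord, dif_pos hk]
    rw [pd_comp_apply Real.differentiable_cos, Real.deriv_cos]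
    simp [Fin.ext_iff]
  · simp only [cosCoord, dif_neg hk, pd_const]
    rw [if_neg (by omega)]

theorem pd_sinProd (a : Fin m) (i : ℕ) :
    pd a (fun v => sinProd v 1 i) u =
      if 1 ≤ (a : ℕ) ∧ (a : ℕ) < i then sinProd u 1 a * cosCoord u a * sinProd u (a + 1) i
      else 0 := by
  unfold sinProd
  rw [pd_finset_prod fun k _ => differentiable_sinCoord k _]
  simp only [pd_sinCoord, mul_ite, mul_zero, sum_ite_eq, mem_Ico]
  split_ifs with ha
  · have herase : (Ico 1 i).erase (a : ℕ) = Ico 1 (a : ℕ) ∪ Ico ((a : ℕ) + 1) i := by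
      ext k; simp only [mem_erase, mem_union, mem_Ico]; omega
    rw [herase, prod_union (disjoint_left.2 fun k hk hk' => by
      simp only [mem_Ico] at hk hk'; omega)]
    ring
  · rfl

theorem pd_sphereCoord (a : Fin m) {i : ℕ} (hi : 1 ≤ i) :
    pd a (fun v => sphereCoord v 1 i) u =
      if 1 ≤ (a : ℕ) ∧ (a : ℕ) ≤ i then sinProd u 1 a * sphereCoordDeriv u a i else 0 := by
  unfold sphereCoord
  rw [pd_fun_mul (f := fun v => sinProd v 1 i) (by fun_prop) (by fun_prop),
    pd_sinProd, pd_cosCoord]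
  rcases lt_trichotomy (a : ℕ) i with hlt | heq | hgt
  · by_cases ha : 1 ≤ (a : ℕ)
    · rw [if_pos ⟨ha, hlt⟩, if_neg hlt.ne, if_pos ⟨ha, hlt.le⟩, sphereCoordDeriv_of_lt u hlt,
        sphereCoord]
      ring
    · rw [if_neg (by omega), if_neg hlt.ne, if_neg (by omega)]
      ring
  · rw [if_neg (by omega), if_pos heq, if_pos ⟨by omega, heq.le⟩, sphereCoordDeriv, if_pos heq.symm,
      heq]
    ring
  · rw [if_neg (by omega), if_neg hgt.ne', if_neg (by omega)]
    ring

end SphereCoordinates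

section HyperboloidCoordinates

variable (hm : 0 < m) (u : Fin m → ℝ)

noncomputable def lorentzSign (i : ℕ) : ℝ := if i = 0 then 1 else -1

theorem ite_eq_lorentzSign_mul (i : ℕ) (x : ℝ) :
    (if i = 0 then x else -x) = lorentzSign i * x := by
  rw [lorentzSign]; split_ifs <;> ring

theorem ite_neg_eq_neg_mul_lorentzSign (i : ℕ) (c : ℝ) :
    (if i = 0 then -c else c) = -c * lorentzSign i := by
  rw [lorentzSign]; split_ifs <;> ring

noncomputable def hyperboloidCoord (i : ℕ) : ℝ :=
  if i = 0 then Real.cosh (u ⟨0, hm⟩) else Real.sinh (u ⟨0, hm⟩) * sphereCoord u 1 i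

/-- The derivative of `hyperboloidCoord hm u i` in the coordinate `u α`. -/
noncomputable def hyperboloidCoordDeriv (α i : ℕ) : ℝ :=
  if α = 0 then (if i = 0 then Real.sinh (u ⟨0, hm⟩) else Real.cosh (u ⟨0, hm⟩) * sphereCoord u 1 i)
  else if i < α then 0 else Real.sinh (u ⟨0, hm⟩) * sinProd u 1 α * sphereCoordDeriv u α i

/-- The diagonal entries of the metric `g / (r r†)`. -/
noncomputable def hyperboloidMetric (α : ℕ) : ℝ :=
  if α = 0 then 1 else Real.sinh (u ⟨0, hm⟩) ^ 2 * sinProd u 1 α ^ 2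

theorem contDiff_hyperboloidCoord (i : ℕ) :
    ContDiff ℝ 2 (fun v => hyperboloidCoord hm v i) := by
  unfold hyperboloidCoord sphereCoord; split_ifs <;> fun_prop

theorem pd_hyperboloidCoord (a : Fin m) (i : ℕ) :
    pd a (fun v => hyperboloidCoord hm v i) u = hyperboloidCoordDeriv hm u a i := by
  have ha0 : a = ⟨0, hm⟩ ↔ (a : ℕ) = 0 := Fin.ext_iff
  unfold hyperboloidCoord hyperboloidCoordDeriv
  by_cases hi : i = 0
  · simp only [hi, if_true]
    rw [pd_comp_apply Real.differentiable_cosh, Real.deriv_cosh]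
    by_cases ha : (a : ℕ) = 0 <;> simp [ha, ha0]
  · simp only [hi, if_false]
    rw [pd_fun_mul (by fun_prop) (by unfold sphereCoord; fun_prop),
      pd_comp_apply Real.differentiable_sinh, Real.deriv_sinh, pd_sphereCoord u a (by omega)]
    by_cases ha : (a : ℕ) = 0
    · simp [ha, ha0]
    · rw [if_neg (ha0.not.2 ha), if_neg ha]
      by_cases hia : i < a
      · rw [if_neg (by omega), if_pos hia]; ring
      · rw [if_pos (by omega), if_neg hia]; ring

theorem sum_lorentzSign_mul_hyperboloidCoord_sq :
    ∑ i ∈ range (m + 1), lorentzSign i * hyperboloidCoord hm u i ^ 2 = 1 := by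
  rw [range_eq_Ico, sum_eq_sum_Ico_succ_bot (by omega),
    sum_congr rfl fun i hi => by
      rw [lorentzSign, hyperboloidCoord, if_neg (by simp at hi; omega),
        if_neg (by simp at hi; omega), mul_pow, neg_one_mul, ← neg_mul],
    ← mul_sum, sum_sphereCoord_sq u (by omega)]
  simp only [lorentzSign, hyperboloidCoord, if_true]
  linear_combination Real.cosh_sq_sub_sinh_sq (u ⟨0, hm⟩)

/-- For `β ≥ 1` only the coordinates `i ≥ β`, all spacelike, depend on `u β`. -/
theorem sum_lorentzSign_mul_hyperboloidCoordDeriv {β : ℕ} (hβ : 0 < β) (hβm : β ≤ m)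
    (f : ℕ → ℝ) :
    ∑ i ∈ range (m + 1), lorentzSign i * (f i * hyperboloidCoordDeriv hm u β i) =
      -(Real.sinh (u ⟨0, hm⟩) * sinProd u 1 β) *
        ∑ i ∈ Ico β (m + 1), f i * sphereCoordDeriv u β i := by
  rw [← sum_range_add_sum_Ico _ (by omega : β ≤ m + 1),
    sum_eq_zero fun i hi => by
      rw [hyperboloidCoordDeriv, if_neg hβ.ne', if_pos (mem_range.1 hi), mul_zero, mul_zero],
    zero_add, mul_sum]
  refine sum_congr rfl fun i hi => ?_
  rw [lorentzSign, hyperboloidCoordDeriv, if_neg (by simp at hi; omega), if_neg hβ.ne',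
    if_neg (by simp at hi; omega)]
  ring

theorem exists_hyperboloidCoordDeriv_eq_mul_sphereCoord {α β : ℕ} (hαβ : α < β) :
    ∃ c, ∀ i ∈ Ico β (m + 1), hyperboloidCoordDeriv hm u α i = c * sphereCoord u β i := by
  rcases Nat.eq_zero_or_pos α with rfl | hα
  · refine ⟨Real.cosh (u ⟨0, hm⟩) * sinProd u 1 β, fun i hi => ?_⟩
    rw [mem_Ico] at hi
    rw [hyperboloidCoordDeriv, if_pos rfl, if_neg (by omega),
      ← sinProd_mul_sphereCoord u (by omega : 1 ≤ β) hi.1, mul_assoc]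
  · refine ⟨Real.sinh (u ⟨0, hm⟩) * sinProd u 1 α * cosCoord u α * sinProd u (α + 1) β,
      fun i hi => ?_⟩
    rw [mem_Ico] at hi
    rw [hyperboloidCoordDeriv, if_neg hα.ne', if_neg (by omega),
      sphereCoordDeriv_of_lt u (by omega), ← sinProd_mul_sphereCoord u hαβ hi.1]
    ring

theorem sum_lorentzSign_mul_hyperboloidCoordDeriv_of_lt {α β : ℕ} (hαβ : α < β) (hβm : β < m) :
    ∑ i ∈ range (m + 1),
      lorentzSign i * (hyperboloidCoordDeriv hm u α i * hyperboloidCoordDeriv hm u β i) = 0 := by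
  obtain ⟨c, hc⟩ := exists_hyperboloidCoordDeriv_eq_mul_sphereCoord hm u hαβ
  rw [sum_lorentzSign_mul_hyperboloidCoordDeriv hm u (by omega) hβm.le,
    sum_congr rfl fun i hi => by rw [hc i hi, mul_assoc], ← mul_sum,
    sum_sphereCoord_mul_sphereCoordDeriv u hβm, mul_zero, mul_zero]

theorem sum_lorentzSign_mul_hyperboloidCoordDeriv_self {α : ℕ} (hα : α < m) :
    ∑ i ∈ range (m + 1),
      lorentzSign i * (hyperboloidCoordDeriv hm u α i * hyperboloidCoordDeriv hm u α i) =
      -hyperboloidMetric hm u α := by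
  rcases Nat.eq_zero_or_pos α with rfl | hα0
  · rw [range_eq_Ico, sum_eq_sum_Ico_succ_bot (by omega),
      sum_congr rfl fun i hi => by
        rw [lorentzSign, hyperboloidCoordDeriv, if_pos rfl, if_neg (by simp at hi; omega),
          if_neg (by simp at hi; omega), ← sq, mul_pow, neg_one_mul, ← neg_mul],
      ← mul_sum, sum_sphereCoord_sq u (by omega)]
    simp only [lorentzSign, hyperboloidCoordDeriv, hyperboloidMetric, if_true]
    linear_combination -Real.cosh_sq_sub_sinh_sq (u ⟨0, hm⟩)
  · rw [sum_lorentzSign_mul_hyperboloidCoordDeriv hm u hα0 hα.le,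
      sum_congr rfl fun i hi => by
        rw [hyperboloidCoordDeriv, if_neg hα0.ne', if_neg (by simp at hi; omega), mul_assoc,
          ← sq],
      ← mul_sum, sum_sphereCoordDeriv_sq u hα, hyperboloidMetric, if_neg hα0.ne']
    ring

end HyperboloidCoordinates

section FinIndexing

variable (hm : 0 < m) (u : Fin m → ℝ)

theorem sinProd_eq_prod_filter {n : ℕ} (hn : n ≤ m) :
    sinProd u 1 n =
      ∏ e ∈ univ.filter (fun e : Fin m => 1 ≤ (e : ℕ) ∧ (e : ℕ) < n), Real.sin (u e) := by
  calc sinProd u 1 n = ∏ k ∈ (range m).filter (fun k => 1 ≤ k ∧ k < n), sinCoord u k := by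
        rw [sinProd]; congr 1; ext k; simp only [mem_Ico, mem_filter, mem_range]; omega
    _ = ∏ e : Fin m, if 1 ≤ (e : ℕ) ∧ (e : ℕ) < n then sinCoord u e else 1 := by
        rw [prod_filter,
          Fin.prod_univ_eq_prod_range (fun k => if 1 ≤ k ∧ k < n then sinCoord u k else 1)]
    _ = _ := by
        rw [prod_filter]; congr 1; ext e; simp [sinCoord]

theorem hyperboloidCoord_eq (i : Fin (m + 1)) :
    hyperboloidCoord hm u i =
      if (i : ℕ) = 0 then Real.cosh (u ⟨0, hm⟩)
      else Real.sinh (u ⟨0, hm⟩) *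
        (∏ e ∈ univ.filter (fun e : Fin m => 1 ≤ (e : ℕ) ∧ (e : ℕ) < (i : ℕ)), Real.sin (u e)) *
        (if h : (i : ℕ) < m then Real.cos (u ⟨i, h⟩) else 1) := by
  rw [hyperboloidCoord, sphereCoord, sinProd_eq_prod_filter u (Nat.lt_succ_iff.1 i.isLt),
    mul_assoc]
  rfl

theorem hyperboloidMetric_eq (a : Fin m) :
    hyperboloidMetric hm u a =
      if (a : ℕ) = 0 then 1 else Real.sinh (u ⟨0, hm⟩) ^ 2 *
        ∏ e ∈ univ.filter (fun e : Fin m => 1 ≤ (e : ℕ) ∧ (e : ℕ) < (a : ℕ)),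
          Real.sin (u e) ^ 2 := by
  rw [hyperboloidMetric, prod_pow, sinProd_eq_prod_filter u a.isLt.le]

theorem sum_fin_lorentzSign_mul_hyperboloidCoord_sq :
    ∑ i : Fin (m + 1), lorentzSign i * hyperboloidCoord hm u i ^ 2 = 1 := by
  rw [Fin.sum_univ_eq_sum_range (fun i => lorentzSign i * hyperboloidCoord hm u i ^ 2),
    sum_lorentzSign_mul_hyperboloidCoord_sq]

theorem sum_lorentzSign_mul_pd_hyperboloidCoord (a b : Fin m) :
    ∑ i : Fin (m + 1), lorentzSign i *
      (pd a (fun v => hyperboloidCoord hm v i) u * pd b (fun v => hyperboloidCoord hm v i) u) =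
      -(if a = b then hyperboloidMetric hm u a else 0) := by
  simp only [pd_hyperboloidCoord]
  rw [Fin.sum_univ_eq_sum_range (fun i => lorentzSign i *
    (hyperboloidCoordDeriv hm u a i * hyperboloidCoordDeriv hm u b i))]
  rcases lt_trichotomy a b with hab | rfl | hba
  · rw [sum_lorentzSign_mul_hyperboloidCoordDeriv_of_lt hm u hab b.isLt, if_neg hab.ne, neg_zero]
  · rw [sum_lorentzSign_mul_hyperboloidCoordDeriv_self hm u a.isLt, if_pos rfl]
  · simp_rw [mul_comm (hyperboloidCoordDeriv hm u a _)]
    rw [sum_lorentzSign_mul_hyperboloidCoordDeriv_of_lt hm u hba a.isLt, if_neg hba.ne',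
      neg_zero]

end FinIndexing

/-- for the hyperboloid model, the normal vectors are
`B_κ^i = −(1/r)θ^i`, `B_{κi} = (1/r†)η_i`, so the model is a dual quadric hypersurface
with `k_0 l_0 = −1/(r r†)`; consequently `H^{(1)}_{abκ} = −(1/r†) g_{ab}`,
`H^{(−1)}_{abκ} = (1/r) g_{ab}`, and
`R^{(±1)}_{abcd} = −(1/(r r†))(g_{ad}g_{bc} − g_{ac}g_{bd})`, with `g_{11} = r r†` and
`g_{ab} = δ_{ab} r r† sinh² u^1 ∏_{2≤c≤a} sin² u^{c−1}`. -/
theorem stmt18 {m : ℕ} (hm : 0 < m) (r rd : ℝ) (hr : 0 < r) (hrd : 1 < rd)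
    (ξ : Fin (m + 1) → (Fin m → ℝ) → ℝ)
    (hξ : ∀ i u, ξ i u =
      if (i : ℕ) = 0 then Real.cosh (u ⟨0, hm⟩)
      else Real.sinh (u ⟨0, hm⟩) *
        (∏ e ∈ Finset.univ.filter (fun e : Fin m => 1 ≤ (e : ℕ) ∧ (e : ℕ) < (i : ℕ)),
          Real.sin (u e)) *
        (if h : (i : ℕ) < m then Real.cos (u ⟨i, h⟩) else 1))
    (θ η : Fin (m + 1) → (Fin m → ℝ) → ℝ)
    (hθ : ∀ i u, θ i u = (if (i : ℕ) = 0 then -r else r) * ξ i u)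
    (hη : ∀ i u, η i u = rd * ξ i u)
    (Bk Bkd : Fin (m + 1) → (Fin m → ℝ) → ℝ)
    (hBk : ∀ i u, Bk i u = if (i : ℕ) = 0 then ξ i u else -ξ i u)
    (hBkd : ∀ i u, Bkd i u = ξ i u)
    (g H1 Hm1 : Fin m → Fin m → (Fin m → ℝ) → ℝ)
    (hg : ∀ a b u, g a b u = ∑ i, pd a (θ i) u * pd b (η i) u)
    (hH1 : ∀ a b u, H1 a b u = ∑ i, pd a (fun v => pd b (θ i) v) u * Bkd i u)
    (hHm1 : ∀ a b u, Hm1 a b u = ∑ i, pd a (fun v => pd b (η i) v) u * Bk i u) :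
    ∀ (a b c e : Fin m) (i : Fin (m + 1)) (u : Fin m → ℝ),
      Bk i u = -(1 / r) * θ i u ∧
      Bkd i u = (1 / rd) * η i u ∧
      (∑ j, Bk j u * pd a (η j) u = 0) ∧
      (∑ j, Bkd j u * pd a (θ j) u = 0) ∧
      (∑ j, Bk j u * Bkd j u = 1) ∧
      g a b u = (if a = b then
        r * rd * (if (a : ℕ) = 0 then 1 else Real.sinh (u ⟨0, hm⟩) ^ 2 *
          ∏ e' ∈ Finset.univ.filter (fun e' : Fin m => 1 ≤ (e' : ℕ) ∧ (e' : ℕ) < (a : ℕ)),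
            Real.sin (u e') ^ 2) else 0) ∧
      H1 a b u = -(1 / rd) * g a b u ∧
      Hm1 a b u = (1 / r) * g a b u ∧
      Hm1 a e u * H1 b c u - Hm1 b e u * H1 a c u
        = -(1 / (r * rd)) * (g a e u * g b c u - g a c u * g b e u) := by
  intro a b c e i u
  obtain rfl : ξ = fun (i : Fin (m + 1)) u => hyperboloidCoord hm u i :=
    funext₂ fun i u => (hξ i u).trans (hyperboloidCoord_eq hm u i).symm
  beta_reduce at hθ hη hBk hBkd
  have hsmooth (j : Fin (m + 1)) := contDiff_hyperboloidCoord hm j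
  have hdiff (j : Fin (m + 1)) := (hsmooth j).differentiable two_ne_zero
  have hQ := sum_fin_lorentzSign_mul_hyperboloidCoord_sq hm
  have hBk' j v : Bk j v = lorentzSign j * hyperboloidCoord hm v j := by
    rw [hBk, ite_eq_lorentzSign_mul]
  have hBkθ j v : Bk j v = -(1 / r) * θ j v := by
    rw [hBk', hθ, ite_neg_eq_neg_mul_lorentzSign]; field_simp
  have hBkdη j v : Bkd j v = 1 / rd * η j v := by
    rw [hBkd, hη]; field_simp
  have hnθ (b : Fin m) v : ∑ j, Bkd j v * pd b (θ j) v = 0 :=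
    sum_mul_pd_eq_zero_of_sum_mul_sq_eq hdiff hQ hθ (β := fun _ => 1) (κ := -r)
      (fun j v => (hBkd j v).trans (one_mul _).symm) (fun j => by rw [one_mul, ite_neg_eq_neg_mul_lorentzSign]) b v
  have hnη (b : Fin m) v : ∑ j, Bk j v * pd b (η j) v = 0 :=
    sum_mul_pd_eq_zero_of_sum_mul_sq_eq hdiff hQ hη hBk' (fun j => mul_comm _ _) b v
  have hgab (a b : Fin m) : g a b u = r * rd * (if a = b then hyperboloidMetric hm u a else 0) := by
    rw [hg, sum_pd_mul_pd_eq_mul_sum (w := fun j : Fin (m + 1) => lorentzSign j) (κ := -(r * rd))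
      hdiff hθ hη (fun j => by rw [ite_neg_eq_neg_mul_lorentzSign]; ring),
      sum_lorentzSign_mul_pd_hyperboloidCoord]
    ring
  have hgsymm (a b : Fin m) : g b a u = g a b u := by
    rcases eq_or_ne a b with rfl | hab
    · rfl
    · rw [hgab, hgab, if_neg hab, if_neg hab.symm]
  have hθsmooth j : ContDiff ℝ 2 (θ j) := by rw [funext (hθ j)]; exact contDiff_const.mul (hsmooth j)
  have hηsmooth j : ContDiff ℝ 2 (η j) := by rw [funext (hη j)]; exact contDiff_const.mul (hsmooth j)
  have hH1g (a b : Fin m) : H1 a b u = -(1 / rd) * g a b u := by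
    rw [hH1, sum_pd_pd_mul_eq_neg_of_orthogonal hθsmooth
      (fun j => (hηsmooth j).differentiable two_ne_zero) hBkdη (hnθ b) a u, ← hg, hgsymm]
  have hHm1g (a b : Fin m) : Hm1 a b u = 1 / r * g a b u := by
    rw [hHm1, sum_pd_pd_mul_eq_neg_of_orthogonal hηsmooth
      (fun j => (hθsmooth j).differentiable two_ne_zero) hBkθ (hnη b) a u, hg, neg_neg]
    congr 1
    exact sum_congr rfl fun j _ => mul_comm _ _
  refine ⟨hBkθ i u, hBkdη i u, hnη a u, hnθ a u, ?_, ?_, hH1g a b, hHm1g a b, ?_⟩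
  · rw [← hQ u]
    exact sum_congr rfl fun j _ => by rw [hBk', hBkd]; ring
  · rw [hgab, hyperboloidMetric_eq, mul_ite, mul_zero]
  · rw [hHm1g, hH1g, hHm1g, hH1g]
    field_simp
    ring
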